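/- Suppose G is a graph on X generated by a countable family F = {f_n : n < ω} of functions. Then there is no uncountable set X0 ⊆ X of pairwise G-adjacent elements on which each f_n is injective. -/
import Mathlib


/-- If `G` on `X` is generated by a countable family `(f n)` of
functions, and `X0 ⊆ X` is an uncountable set of pairwise `G`-adjacent elements
on which each `f n` is injective, then we get a contradiction. -/
theorem stmt_4 {X : Type*} (G : X → X → Prop)
    (hsym : ∀ x y, G x y → G y x) (hirr : ∀ x, ¬ G x x)
    (f : ℕ → X → X)
    (hgen : ∀ x y, G x y ↔ ∃ n, x = f n y ∨ y = f n x)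
    (X0 : Set X) (hunc : ¬ X0.Countable)
    (hpair : ∀ x ∈ X0, ∀ y ∈ X0, x ≠ y → G x y)
    (hinj : ∀ n, Set.InjOn (f n) X0) :
    False := by
  obtain ⟨x₀, hx₀⟩ : X0.Nonempty := by
    rcases X0.eq_empty_or_nonempty with h | h
    · exact absurd (h ▸ Set.countable_empty) hunc
    · exact h
  apply hunc
  have hcov : X0 ⊆ {x₀} ∪ (⋃ n, {f n x₀}) ∪ (⋃ n, {y ∈ X0 | x₀ = f n y}) := by
    intro y hy
    by_cases hyx : y = x₀
    · exact Or.inl (Or.inl hyx)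
    · obtain ⟨n, hn⟩ := (hgen x₀ y).1 (hpair x₀ hx₀ y hy (Ne.symm hyx))
      cases hn with
      | inl h => exact Or.inr (Set.mem_iUnion.2 ⟨n, hy, h⟩)
      | inr h => exact Or.inl (Or.inr (Set.mem_iUnion.2 ⟨n, h⟩))
  refine Set.Countable.mono hcov ?_
  refine ((Set.countable_singleton _).union (Set.countable_iUnion fun n => Set.countable_singleton _)).union
    (Set.countable_iUnion fun n => Set.Subsingleton.countable ?_)
  rintro a ⟨ha, ha'⟩ b ⟨hb, hb'⟩
  exact hinj n ha hb (ha'.symm.trans hb')
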